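/- Let α be the unique real root of x³ − x² − 1 and set a = α²/(α³ + 2). Then for all integers n ≥ 0, ρ ≥ 2, ℓ ≥ 1, m ≥ 1, k ≥ 1, and digits d1, d2, d3 with 1 ≤ d1 ≤ ρ−1 and 0 ≤ d2, d3 ≤ ρ−1, one has (ρ − 1)·a·αⁿ ≠ (d1·ρ^{ℓ+m} − (d1 − d2)·ρ^m − (d2 − d3))·ρ^k. (Equivalently, the quantity Λ₃ = ((d1·ρ^{ℓ+m} − (d1−d2)·ρ^m − (d2−d3))/((ρ−1)a))·α^{−n}·ρ^k − 1 is nonzero.) -/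

import Mathlib

open Polynomial

lemma int_no_root (z : ℤ) : z^3 ≠ z^2 + 1 := by
  intro h
  rcases le_or_gt z 1 with hz | hz
  · nlinarith [sq_nonneg z]
  · nlinarith [sq_nonneg z]

lemma no_rat_root (q : ℚ) : q^3 ≠ q^2 + 1 := by
  intro h
  have hq : (q.num : ℚ) = q * q.den := by rw [Rat.mul_den_eq_num]
  have hZ : q.num ^ 3 = q.num ^ 2 * q.den + (q.den : ℤ)^3 := by
    have h2 : (q.num : ℚ) ^ 3 = (q.num:ℚ) ^ 2 * q.den + (q.den : ℚ)^3 := by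
      rw [hq]
      have h3 : q^3 * (q.den:ℚ)^3 = (q^2 + 1) * (q.den:ℚ)^3 := by rw [h]
      ring_nf
      ring_nf at h3
      linarith [h3]
    exact_mod_cast h2
  have hdvd : (q.den : ℤ) ∣ q.num ^ 3 := ⟨q.num ^ 2 + (q.den:ℤ)^2, by linarith [hZ]⟩
  have hdvd' : q.den ∣ (q.num ^ 3).natAbs := by simpa using Int.natAbs_dvd_natAbs.mpr hdvd
  rw [Int.natAbs_pow] at hdvd'
  have hden1 : q.den = 1 := (Nat.Coprime.pow_right 3 q.reduced.symm).eq_one_of_dvd hdvd'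
  have hz : q.num ^ 3 = q.num ^ 2 + 1 := by rw [hden1] at hZ; simpa using hZ
  exact int_no_root _ hz

noncomputable def Pcub : ℚ[X] := X^3 - X^2 - 1

lemma Pcub_monic : Pcub.Monic := by
  unfold Pcub; monicity!

lemma Pcub_natDegree : Pcub.natDegree = 3 := by
  unfold Pcub; compute_degree!

lemma Pcub_irred : Irreducible Pcub := by
  rw [Pcub_monic.irreducible_iff_roots_eq_zero_of_degree_le_three
    (by rw [Pcub_natDegree]; norm_num) (by rw [Pcub_natDegree])]
  rw [Multiset.eq_zero_iff_forall_notMem]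
  intro x hx
  have h0 : Pcub ≠ 0 := Pcub_monic.ne_zero
  rw [mem_roots h0] at hx
  have hx' : x^3 - x^2 - 1 = 0 := by
    have h := hx
    unfold Pcub at h
    simpa [IsRoot] using h
  exact no_rat_root x (by linarith)

lemma lin_indep (α : ℝ) (hroot : α ^ 3 = α ^ 2 + 1)
    (A B C : ℚ) (h : (A:ℝ) * α^2 + B * α + C = 0) : A = 0 ∧ B = 0 ∧ C = 0 := by
  have haev : (Polynomial.aeval α) Pcub = 0 := by
    unfold Pcub
    simp [hroot]
  by_contra hne
  have hQ : (Polynomial.C A * X^2 + Polynomial.C B * X + Polynomial.C C : ℚ[X]) ≠ 0 := by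
    intro h0
    apply hne
    refine ⟨?_, ?_, ?_⟩
    · have := congrArg (fun p => Polynomial.coeff p 2) h0; simpa using this
    · have := congrArg (fun p => Polynomial.coeff p 1) h0; simpa using this
    · have := congrArg (fun p => Polynomial.coeff p 0) h0; simpa using this
  have haevQ : (Polynomial.aeval α) (Polynomial.C A * X^2 + Polynomial.C B * X + Polynomial.C C) = 0 := by
    simpa using h
  have hmin : minpoly ℚ α = Pcub :=
    (minpoly.eq_of_irreducible_of_monic Pcub_irred haev Pcub_monic).symm
  have hdvd := minpoly.dvd ℚ α haevQ
  rw [hmin] at hdvd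
  have hdeg := Polynomial.natDegree_le_of_dvd hdvd hQ
  rw [Pcub_natDegree] at hdeg
  have : (Polynomial.C A * X^2 + Polynomial.C B * X + Polynomial.C C : ℚ[X]).natDegree ≤ 2 := by
    compute_degree
  omega

def Tseq : ℕ → ℤ × ℤ × ℤ
  | 0 => (0, 0, 1)
  | j+1 => ((Tseq j).2.2, (Tseq j).1, (Tseq j).2.1 + (Tseq j).2.2)

lemma Tseq_pow (α : ℝ) (hroot : α ^ 3 = α ^ 2 + 1) :
    ∀ j, α ^ (j+2) = ((Tseq j).1 : ℝ) + ((Tseq j).2.1 : ℝ) * α + ((Tseq j).2.2 : ℝ) * α^2 := by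
  intro j
  induction j with
  | zero => simp [Tseq]
  | succ i ih =>
    have : α ^ (i+1+2) = α ^ (i+2) * α := by ring
    rw [this, ih]
    simp only [Tseq]
    push_cast
    linear_combination ((Tseq i).2.2 : ℝ) * hroot

lemma Tseq_pos : ∀ j, 1 ≤ (Tseq (j+2)).1 ∧ 1 ≤ (Tseq (j+2)).2.1 ∧ 1 ≤ (Tseq (j+2)).2.2 := by
  intro j
  induction j with
  | zero => norm_num [Tseq]
  | succ i ih =>
    obtain ⟨h1, h2, h3⟩ := ih
    refine ⟨by simpa [Tseq] using h3, by simpa [Tseq] using h1, ?_⟩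
    show 1 ≤ (Tseq (i+2)).2.1 + (Tseq (i+2)).2.2
    omega


lemma Tseq_key (n : ℕ) : ¬((Tseq n).2.1 = 0 ∧ (Tseq n).1 = 3 * (Tseq n).2.2) := by
  match n with
  | 0 => decide
  | 1 => decide
  | (j+2) =>
    intro ⟨h1, _⟩
    have := (Tseq_pos j).2.1
    omega

theorem Lambda_three_ne_zero
    (α : ℝ) (hroot : α ^ 3 = α ^ 2 + 1) (hα : 1 < α)
    (a : ℝ) (ha : a = α ^ 2 / (α ^ 3 + 2))
    (n ρ ℓ m k d1 d2 d3 : ℕ) (hρ : 2 ≤ ρ) (hℓ : 1 ≤ ℓ) (hm : 1 ≤ m) (hk : 1 ≤ k)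
    (hd1 : 1 ≤ d1) (hd1' : d1 ≤ ρ - 1) (hd2 : d2 ≤ ρ - 1) (hd3 : d3 ≤ ρ - 1) :
    ((ρ : ℝ) - 1) * a * α ^ n ≠
      ((d1 : ℝ) * (ρ : ℝ) ^ (ℓ + m) - ((d1 : ℝ) - (d2 : ℝ)) * (ρ : ℝ) ^ m
        - ((d2 : ℝ) - (d3 : ℝ))) * (ρ : ℝ) ^ k := by
  intro heq
  set N : ℤ := ((d1:ℤ) * (ρ:ℤ) ^ (ℓ + m) - ((d1:ℤ) - (d2:ℤ)) * (ρ:ℤ) ^ m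
      - ((d2:ℤ) - (d3:ℤ))) * (ρ:ℤ) ^ k with hN
  have hNR : ((N:ℝ)) = ((d1 : ℝ) * (ρ : ℝ) ^ (ℓ + m) - ((d1 : ℝ) - (d2 : ℝ)) * (ρ : ℝ) ^ m
        - ((d2 : ℝ) - (d3 : ℝ))) * (ρ : ℝ) ^ k := by
    rw [hN]; push_cast; ring
  have hden : α ^ 3 + 2 ≠ 0 := by nlinarith
  -- key polynomial identity
  have key : ((ρ:ℝ) - 1) * α ^ (n + 2) = (N:ℝ) * (α^2 + 3) := by
    rw [ha] at heq
    rw [hNR]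
    have : ((ρ:ℝ) - 1) * α ^ (n+2) = (((ρ:ℝ) - 1) * (α^2 / (α^3+2)) * α^n) * (α^3+2) := by
      field_simp; ring
    rw [this, heq, hroot]
    ring
  -- expand α^(n+2)
  have hpow := Tseq_pow α hroot n
  set p := (Tseq n).1
  set q := (Tseq n).2.1
  set r := (Tseq n).2.2
  rw [hpow] at key
  -- quadratic relation with integer coefficients
  set A : ℤ := ((ρ:ℤ) - 1) * r - N with hA
  set B : ℤ := ((ρ:ℤ) - 1) * q with hB
  set C : ℤ := ((ρ:ℤ) - 1) * p - 3 * N with hC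
  have hquad : ((A:ℚ):ℝ) * α^2 + ((B:ℚ):ℝ) * α + ((C:ℚ):ℝ) = 0 := by
    push_cast [hA, hB, hC]
    push_cast at key
    linarith [key]
  obtain ⟨hA0, hB0, hC0⟩ := lin_indep α hroot _ _ _ hquad
  have hA0' : A = 0 := by exact_mod_cast hA0
  have hB0' : B = 0 := by exact_mod_cast hB0
  have hC0' : C = 0 := by exact_mod_cast hC0
  have hρ1 : (1:ℤ) ≤ (ρ:ℤ) - 1 := by
    have : (2:ℤ) ≤ (ρ:ℤ) := by exact_mod_cast hρ
    omega
  have hq0 : q = 0 := by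
    rw [hB] at hB0'
    have := mul_eq_zero.mp hB0'
    omega
  have hpr : ((ρ:ℤ) - 1) * (p - 3 * r) = 0 := by
    rw [hA] at hA0'
    rw [hC] at hC0'
    ring_nf
    ring_nf at hA0' hC0'
    omega
  rcases mul_eq_zero.mp hpr with h | h
  · omega
  · exact Tseq_key n ⟨hq0, by omega⟩
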